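/- arXiv:1811.07515 — 7 statements merged into one kernel-verified Lean document; each statement's English description precedes it below -/
import Mathlib

section
/- For every real number λ > 0, the probability that a Poisson random variable with rate λ takes a value at most 0.8λ is at most e^{-0.01λ}; that is, ∑_{n ∈ ℕ, n ≤ 0.8λ} e^{-λ} λ^n / n! ≤ e^{-0.01λ}. -/
/-
Chernoff's bound: for `t ≥ 0` the indicator of `n ≤ k` is at most `e^{t(k - n)}`, and summing this
weight against the Poisson distribution gives `e^{tk - λ + λe^{-t}}`. The choice `e^{-t} = 0.8` turns the
exponent into `λ(0.8 log(5/4) - 0.2)`, which is at most `-0.01λ` because `log(5/4) ≤ 0.2375`.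
-/

open Real

noncomputable def poissonLowerTail (lam k : ℝ) : ℝ :=
  ∑' n : ℕ, if (n : ℝ) ≤ k then exp (-lam) * lam ^ n / n.factorial else 0

lemma tsum_pow_div_factorial (x : ℝ) : ∑' n : ℕ, x ^ n / n.factorial = exp x := by
  rw [exp_eq_exp_ℝ, NormedSpace.exp_eq_tsum_div]

lemma poisson_term_indicator_le {lam k t : ℝ} (hlam : 0 ≤ lam) (ht : 0 ≤ t) (n : ℕ) :
    (if (n : ℝ) ≤ k then exp (-lam) * lam ^ n / n.factorial else 0)
      ≤ exp (t * k - lam) * ((lam * exp (-t)) ^ n / n.factorial) := by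
  have hweight : exp (t * k - lam) * ((lam * exp (-t)) ^ n / n.factorial)
      = exp (-lam) * exp (t * (k - n)) * lam ^ n / n.factorial := by
    have hexp : exp (t * k - lam) * exp (n * -t) = exp (-lam) * exp (t * (k - n)) := by
      rw [← exp_add, ← exp_add]
      ring_nf
    rw [mul_pow, ← exp_nat_mul]
    linear_combination lam ^ n / n.factorial * hexp
  rw [hweight]
  split_ifs with hn
  · have : 1 ≤ exp (t * (k - n)) := one_le_exp (mul_nonneg ht (sub_nonneg.2 hn))
    gcongr
    exact le_mul_of_one_le_right (exp_pos _).le this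
  · positivity

theorem poissonLowerTail_le_exp {lam k t : ℝ} (hlam : 0 ≤ lam) (ht : 0 ≤ t) :
    poissonLowerTail lam k ≤ exp (t * k - lam + lam * exp (-t)) := by
  have hbound := poisson_term_indicator_le (k := k) hlam ht
  have hsummable : Summable fun n : ℕ ↦ exp (t * k - lam) * ((lam * exp (-t)) ^ n / n.factorial) :=
    (summable_pow_div_factorial _).mul_left _
  have hnonneg (n : ℕ) :
      0 ≤ if (n : ℝ) ≤ k then exp (-lam) * lam ^ n / n.factorial else 0 := by
    split_ifs <;> positivity
  calc poissonLowerTail lam k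
      ≤ ∑' n : ℕ, exp (t * k - lam) * ((lam * exp (-t)) ^ n / n.factorial) :=
        (hsummable.of_nonneg_of_le hnonneg hbound).tsum_le_tsum hbound hsummable
    _ = exp (t * k - lam + lam * exp (-t)) := by
        rw [tsum_mul_left, tsum_pow_div_factorial, ← exp_add]

lemma log_five_div_four_le : log (5 / 4) ≤ 0.2375 := by
  rw [log_le_iff_le_exp (by norm_num)]
  nlinarith [quadratic_le_exp_of_nonneg (x := 0.2375) (by norm_num)]

/-- Poisson lower tail: for `λ > 0`, `Pr[Pois(λ) ≤ 0.8λ] ≤ e^{-0.01λ}`. -/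
theorem poisson_lower_tail_08 (lam : ℝ) (hlam : 0 < lam) :
    (∑' n : ℕ, if (n : ℝ) ≤ 0.8 * lam
        then Real.exp (-lam) * lam ^ n / (Nat.factorial n : ℝ) else 0)
      ≤ Real.exp (-(0.01 * lam)) := by
  have hexp : exp (-log (5 / 4)) = 0.8 := by
    rw [exp_neg, exp_log (by norm_num)]
    norm_num
  calc poissonLowerTail lam (0.8 * lam)
      ≤ exp (log (5 / 4) * (0.8 * lam) - lam + lam * exp (-log (5 / 4))) :=
        poissonLowerTail_le_exp hlam.le (log_nonneg (by norm_num))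
    _ ≤ exp (-(0.01 * lam)) := by
        rw [hexp]
        gcongr
        nlinarith [log_five_div_four_le]
end

section
/- For all real numbers k > 0 and μ with μ ≥ 2k, a Poisson random variable with rate μ takes a value at most 1.6k with probability at most e^{-0.02k}; that is, ∑_{n ∈ ℕ, n ≤ 1.6k} e^{-μ} μ^n / n! ≤ e^{-0.02k}. -/
/-!
Chernoff bound: for every `t ≥ 0` the indicator of `n ≤ a` is at most `exp (t * (a - n))`, and
summing this against the Poisson weights gives
`Pr[Pois(μ) ≤ a] ≤ exp (t * a - μ * (1 - exp (-t)))`.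
For `t = 0.2375` one has `exp (-t) ≤ 0.8`, so with `a = 1.6 k` and `μ ≥ 2 k` the exponent is at most
`0.38 k - 0.4 k = -0.02 k`.
-/

open Real Nat

lemma ite_le_exp_mul_sub {t a x : ℝ} (ht : 0 ≤ t) (hx : 0 ≤ x) (n : ℕ) :
    (if (n : ℝ) ≤ a then x else 0) ≤ exp (t * (a - n)) * x := by
  split_ifs with hna
  · exact le_mul_of_one_le_left hx (one_le_exp (mul_nonneg ht (sub_nonneg.mpr hna)))
  · positivity

lemma hasSum_exp_mul_poisson {μ s : ℝ} :
    HasSum (fun n : ℕ ↦ exp (s * n) * (exp (-μ) * μ ^ n / n !)) (exp (-μ + exp s * μ)) := by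
  have h := (NormedSpace.expSeries_div_hasSum_exp (exp s * μ)).mul_left (exp (-μ))
  rw [← exp_eq_exp_ℝ, ← exp_add] at h
  refine h.congr_fun fun n ↦ ?_
  rw [mul_pow, ← exp_nat_mul, mul_comm (n : ℝ) s]
  ring

theorem poisson_lower_tail_le_exp {μ a t : ℝ} (hμ : 0 ≤ μ) (ht : 0 ≤ t) :
    (∑' n : ℕ, if (n : ℝ) ≤ a then exp (-μ) * μ ^ n / n ! else 0)
      ≤ exp (t * a - μ * (1 - exp (-t))) := by
  have hle (n : ℕ) : (if (n : ℝ) ≤ a then exp (-μ) * μ ^ n / n ! else 0)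
      ≤ exp (t * a) * (exp (-t * n) * (exp (-μ) * μ ^ n / n !)) := by
    calc _ ≤ exp (t * (a - n)) * (exp (-μ) * μ ^ n / n !) :=
          ite_le_exp_mul_sub ht (by positivity) n
      _ = _ := by rw [← mul_assoc, ← exp_add]; ring_nf
  have hsum := (hasSum_exp_mul_poisson (μ := μ) (s := -t)).mul_left (exp (t * a))
  have hsummable := hsum.summable.of_nonneg_of_le (fun n ↦ by split_ifs <;> positivity) hle
  calc _ ≤ exp (t * a) * exp (-μ + exp (-t) * μ) := hasSum_le hle hsummable.hasSum hsum
    _ = _ := by rw [← exp_add]; ring_nf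

lemma exp_neg_le_four_fifths : exp (-0.2375) ≤ 0.8 := by
  have h := quadratic_le_exp_of_nonneg (x := 0.2375) (by norm_num)
  rw [exp_neg, inv_le_comm₀ (exp_pos _) (by norm_num)]
  linarith

/-- Completeness case of the Goldwasser–Sipser-style AM protocol for
Gap-Inner-Product: for `k > 0` and `μ ≥ 2k`, `Pr[Pois(μ) ≤ 1.6k] ≤ e^{-0.02k}`. -/
theorem poisson_completeness_tail (k mu : ℝ) (hk : 0 < k) (hmu : 2 * k ≤ mu) :
    (∑' n : ℕ, if (n : ℝ) ≤ 1.6 * k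
        then Real.exp (-mu) * mu ^ n / (Nat.factorial n : ℝ) else 0)
      ≤ Real.exp (-(0.02 * k)) := by
  have hmu0 : 0 ≤ mu := by linarith
  refine (poisson_lower_tail_le_exp hmu0 (by norm_num : (0 : ℝ) ≤ 0.2375)).trans ?_
  have hgap : 0.2 * mu ≤ mu * (1 - exp (-0.2375)) := by nlinarith [exp_neg_le_four_fifths]
  rw [exp_le_exp]
  linarith
end

section
/- For all real numbers k > 0 and μ with 0 < μ ≤ k, a Poisson random variable with rate μ takes a value at least 1.2k with probability at most e^{-0.01k}; that is, ∑_{n ∈ ℕ, n ≥ 1.2k} e^{-μ} μ^n / n! ≤ e^{-0.01k}. -/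
/-!
Chernoff's bound: for `z ≥ 1` the indicator of `n ≥ a` is at most `z ^ n / z ^ a`, so the tail
of `Pois(μ)` beyond `a` is at most its probability generating function `e^{μ(z - 1)}` divided by
`z ^ a`. Taking `z = 1.2` and `a = 1.2k` gives the bound `exp (0.2μ - 1.2k log 1.2)`, and
`log 1.2 ≥ 0.175` makes the exponent at most `-0.01k` when `μ ≤ k`.
-/

open Real Nat

theorem poisson_hasSum_mul_pow (μ z : ℝ) :
    HasSum (fun n : ℕ => exp (-μ) * μ ^ n / n ! * z ^ n) (exp (μ * (z - 1))) := by
  have hterm : (fun n : ℕ => exp (-μ) * μ ^ n / n ! * z ^ n) =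
      fun n => exp (-μ) * ((μ * z) ^ n / n !) := by
    ext n
    ring
  rw [hterm, show μ * (z - 1) = -μ + μ * z by ring, exp_add, exp_eq_exp_ℝ]
  exact (NormedSpace.expSeries_div_hasSum_exp (μ * z)).mul_left _

theorem tsum_ite_le_div_rpow_of_hasSum_mul_pow {p : ℕ → ℝ} {z M : ℝ} (hp : ∀ n, 0 ≤ p n)
    (hz : 1 ≤ z) (hM : HasSum (fun n => p n * z ^ n) M) (a : ℝ) :
    ∑' n : ℕ, (if a ≤ n then p n else 0) ≤ M / z ^ a := by
  have hza : 0 < z ^ a := rpow_pos_of_pos (by linarith) a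
  have hle : ∀ n : ℕ, (if a ≤ n then p n else 0) ≤ p n * z ^ n / z ^ a := by
    intro n
    split_ifs with han
    · rw [le_div_iff₀ hza, ← rpow_natCast]
      exact mul_le_mul_of_nonneg_left (rpow_le_rpow_of_exponent_le hz han) (hp n)
    · have := hp n
      positivity
  have hnonneg : ∀ n : ℕ, 0 ≤ (if a ≤ n then p n else 0) := fun n => by
    split_ifs
    exacts [hp n, le_rfl]
  have hsum := hM.div_const (z ^ a)
  exact hasSum_le hle (Summable.of_nonneg_of_le hnonneg hle hsum.summable).hasSum hsum

theorem le_log_six_fifths : (0.175 : ℝ) ≤ log 1.2 := by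
  rw [le_log_iff_exp_le (by norm_num)]
  exact (exp_le_two_add_div_two_sub (by norm_num) (by norm_num)).trans (by norm_num)

theorem poisson_soundness_tail_general (k mu : ℝ) (hmu0 : 0 < mu)
    (hmu : mu ≤ k) :
    (∑' n : ℕ, if 1.2 * k ≤ (n : ℝ)
        then Real.exp (-mu) * mu ^ n / (Nat.factorial n : ℝ) else 0)
      ≤ Real.exp (-(0.01 * k)) := by
  have hk : 0 ≤ k := hmu0.le.trans hmu
  calc _ ≤ exp (mu * (1.2 - 1)) / 1.2 ^ (1.2 * k) :=
        tsum_ite_le_div_rpow_of_hasSum_mul_pow (fun n => by positivity) (by norm_num)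
          (poisson_hasSum_mul_pow mu 1.2) (1.2 * k)
    _ = exp (0.2 * mu - 1.2 * k * log 1.2) := by
        rw [rpow_def_of_pos (by norm_num), ← exp_sub]
        ring_nf
    _ ≤ exp (-(0.01 * k)) := by
        gcongr
        nlinarith [mul_le_mul_of_nonneg_left le_log_six_fifths hk]

/-- Soundness case of the Goldwasser–Sipser-style AM protocol for
Gap-Inner-Product: for `k > 0` and `0 < μ ≤ k`, `Pr[Pois(μ) ≥ 1.2k] ≤ e^{-0.01k}`. -/
theorem poisson_soundness_tail (k mu : ℝ) (hk : 0 < k) (hmu0 : 0 < mu)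
    (hmu : mu ≤ k) :
    (∑' n : ℕ, if 1.2 * k ≤ (n : ℝ)
        then Real.exp (-mu) * mu ^ n / (Nat.factorial n : ℝ) else 0)
      ≤ Real.exp (-(0.01 * k)) :=
  poisson_soundness_tail_general k mu hmu0 hmu
end

section
/- For all d, t ∈ ℕ, there exists a finitely supported probability distribution μ over multivariate polynomials P in d variables over the field 𝔽₂ = ZMod 2 such that every polynomial in the support of μ has total degree at most t, and for every x ∈ {0,1}^d, the probability over P ∼ μ that P(x) = OR_d(x) is at least 1 − 2^{-t}, where OR_d(x) ∈ 𝔽₂ equals 0 if x = 0^d and equals 1 otherwise. -/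
/-!
For `r = (r₁, …, r_t)` uniform in `(𝔽₂^d)^t`, take `P_r = 1 - ∏ⱼ (1 - ⟨rⱼ, X⟩)`, of degree at most
`t`. Since every value in `𝔽₂` is `0` or `1`, `P_r(x) = 0` exactly when all `⟨rⱼ, x⟩` vanish. So
`P_r(0) = 0` always, while for `x ≠ 0` the functional `v ↦ ⟨v, x⟩` maps onto `𝔽₂`, its kernel is
half of `𝔽₂^d`, and `P_r(x) ≠ OR(x)` has probability exactly `2^{-t}`. The required distribution
is the law of `P_r`.
-/

open Finset MvPolynomial

theorem card_filter_dotProduct_eq_zero_mul_card {K ι : Type*} [DivisionRing K] [Fintype K]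
    [DecidableEq K] [Fintype ι] [DecidableEq ι] {x : ι → K} (hx : x ≠ 0) :
    #{v : ι → K | v ⬝ᵥ x = 0} * Fintype.card K = Fintype.card K ^ Fintype.card ι := by
  let φ : (ι → K) →+ K := AddMonoidHom.mk' (· ⬝ᵥ x) fun v w => add_dotProduct v w x
  obtain ⟨i, hi⟩ := Function.ne_iff.1 hx
  have hφ : Function.Surjective φ := fun c =>
    ⟨Pi.single i (c * (x i)⁻¹), by simp [φ, single_dotProduct, inv_mul_cancel_right₀ hi]⟩
  have key := φ.ker.card_mul_index
  rw [AddSubgroup.index_ker, AddMonoidHom.range_eq_top.2 hφ, AddSubgroup.card_top] at key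
  simpa [Nat.card_eq_fintype_card, Fintype.card_subtype, φ] using key

theorem card_filter_forall_apply {κ V : Type*} [Fintype κ] [DecidableEq κ] [Fintype V]
    (p : V → Prop) [DecidablePred p] :
    #{r : κ → V | ∀ j, p (r j)} = #{v | p v} ^ Fintype.card κ := by
  have : ({r : κ → V | ∀ j, p (r j)} : Finset _) = Fintype.piFinset fun _ => {v | p v} := by
    ext r
    simp [Fintype.mem_piFinset]
  rw [this, Fintype.card_piFinset, prod_const, card_univ]

section UniformPushforward

variable {Ω β : Type*} [Fintype Ω] [DecidableEq β] (f : Ω → β)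

noncomputable def uniformPushforward (b : β) : ℝ :=
  #{ω | f ω = b} / Fintype.card Ω

theorem uniformPushforward_nonneg (b : β) : 0 ≤ uniformPushforward f b := by
  unfold uniformPushforward
  positivity

theorem uniformPushforward_ne_zero_iff {b : β} : uniformPushforward f b ≠ 0 ↔ b ∈ Set.range f := by
  rw [uniformPushforward, div_ne_zero_iff, Nat.cast_ne_zero, Nat.cast_ne_zero, ← pos_iff_ne_zero,
    card_pos, filter_nonempty_iff]
  simp only [mem_univ, true_and, Set.mem_range]
  exact ⟨fun h => h.1, fun ⟨ω, hω⟩ => ⟨⟨ω, hω⟩, (Fintype.card_pos_iff.2 ⟨ω⟩).ne'⟩⟩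

theorem sum_filter_uniformPushforward (q : β → Prop) [DecidablePred q] :
    ∑ b ∈ (univ.image f).filter q, uniformPushforward f b =
      #{ω | q (f ω)} / Fintype.card Ω := by
  simp only [uniformPushforward]
  rw [← sum_div, card_eq_sum_card_fiberwise (f := f) (t := (univ.image f).filter q)]
  · push_cast
    refine congrArg (· / _) (sum_congr rfl fun b hb => ?_)
    congr 2
    ext ω
    simp only [mem_filter, mem_univ, true_and, iff_and_self]
    rintro rfl
    exact (mem_filter.1 hb).2
  · intro ω hω
    simp_all

theorem sum_uniformPushforward [Nonempty Ω] : ∑ b ∈ univ.image f, uniformPushforward f b = 1 := by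
  simpa using sum_filter_uniformPushforward f (fun _ => True)

theorem one_sub_le_sum_filter_uniformPushforward [Nonempty Ω] (q : β → Prop) [DecidablePred q]
    {ε : ℝ} (hε : #{ω | ¬ q (f ω)} ≤ ε * Fintype.card Ω) :
    1 - ε ≤ ∑ b ∈ (univ.image f).filter q, uniformPushforward f b := by
  have hΩ : (0 : ℝ) < Fintype.card Ω := by exact_mod_cast Fintype.card_pos
  have hsplit : (#{ω | q (f ω)} : ℝ) + #{ω | ¬ q (f ω)} = Fintype.card Ω := by
    exact_mod_cast card_filter_add_card_filter_not (s := univ) (fun ω => q (f ω))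
  rw [sum_filter_uniformPushforward, le_div_iff₀ hΩ]
  linarith

end UniformPushforward

namespace RazborovSmolensky

section LinearForm

variable {σ R : Type*} [Fintype σ] [CommSemiring R]

noncomputable def linearForm (r : σ → R) : MvPolynomial σ R :=
  ∑ i, C (r i) * X i

theorem totalDegree_linearForm_le (r : σ → R) : (linearForm r).totalDegree ≤ 1 := by
  refine (totalDegree_finsetSum _ _).trans (Finset.sup_le fun i _ => ?_)
  rw [C_mul_X_eq_monomial]
  exact (totalDegree_monomial_le _ _).trans (by simp)

@[simp]
theorem eval_linearForm (r x : σ → R) : eval x (linearForm r) = r ⬝ᵥ x := by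
  simp [linearForm, dotProduct]

end LinearForm

variable {κ σ : Type*} [Fintype κ] [Fintype σ]

noncomputable def orPoly (r : κ → σ → ZMod 2) : MvPolynomial σ (ZMod 2) :=
  1 - ∏ j, (1 - linearForm (r j))

theorem totalDegree_orPoly_le (r : κ → σ → ZMod 2) :
    (orPoly r).totalDegree ≤ Fintype.card κ := by
  have h1 : ∀ j, (1 - linearForm (r j)).totalDegree ≤ 1 := fun j =>
    (totalDegree_sub _ _).trans (max_le (by simp) (totalDegree_linearForm_le _))
  refine (totalDegree_sub _ _).trans (max_le (by simp) ?_)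
  calc (∏ j, (1 - linearForm (r j))).totalDegree
      ≤ ∑ j, (1 - linearForm (r j)).totalDegree := totalDegree_finsetProd _ _
    _ ≤ ∑ _j : κ, 1 := sum_le_sum fun j _ => h1 j
    _ = Fintype.card κ := by simp

theorem eval_orPoly_eq_zero_iff (r : κ → σ → ZMod 2) (x : σ → ZMod 2) :
    eval x (orPoly r) = 0 ↔ ∀ j, r j ⬝ᵥ x = 0 := by
  have hbit : ∀ a : ZMod 2, a ≠ 0 ↔ 1 - a = 0 := by decide
  simp only [orPoly, map_sub, map_one, map_prod, eval_linearForm, sub_eq_zero]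
  constructor
  · intro h j
    by_contra hj
    rw [prod_eq_zero (mem_univ j) ((hbit _).1 hj)] at h
    exact one_ne_zero h
  · intro h
    rw [prod_eq_one fun j _ => by rw [h j, sub_zero]]

theorem card_orPoly_error_mul_le [DecidableEq κ] [DecidableEq σ] (x : σ → ZMod 2) :
    #{r : κ → σ → ZMod 2 | eval x (orPoly r) ≠ if x = 0 then 0 else 1} * 2 ^ Fintype.card κ ≤
      Fintype.card (κ → σ → ZMod 2) := by
  by_cases hx : x = 0
  · subst hx
    have hzero (r : κ → σ → ZMod 2) : eval 0 (orPoly r) = 0 :=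
      (eval_orPoly_eq_zero_iff r 0).2 fun j => dotProduct_zero _
    rw [filter_false_of_mem fun r _ => by rw [hzero, if_pos rfl, ne_eq, not_not], card_empty,
      zero_mul]
    exact Nat.zero_le _
  have hbit : ∀ a : ZMod 2, a ≠ 1 ↔ a = 0 := by decide
  have herr : univ.filter (fun r : κ → σ → ZMod 2 => eval x (orPoly r) ≠ if x = 0 then 0 else 1) =
      univ.filter fun r => ∀ j, r j ⬝ᵥ x = 0 :=
    filter_congr fun r _ => by rw [if_neg hx, hbit, eval_orPoly_eq_zero_iff]
  have hker := card_filter_dotProduct_eq_zero_mul_card hx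
  rw [ZMod.card] at hker
  rw [herr, card_filter_forall_apply fun v : σ → ZMod 2 => v ⬝ᵥ x = 0, ← mul_pow, hker]
  simp

end RazborovSmolensky

open RazborovSmolensky

/-- Razborov–Smolensky probabilistic polynomial for OR: for all `d, t`, there
is a finitely supported probability distribution over `𝔽₂`-polynomials in `d`
variables, all of total degree at most `t`, such that for every input
`x ∈ {0,1}^d` a random polynomial from the distribution agrees with
`OR_d(x)` with probability at least `1 - 2^{-t}`. -/
theorem probabilistic_polynomial_for_OR (d t : ℕ) :
    ∃ (S : Finset (MvPolynomial (Fin d) (ZMod 2)))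
      (w : MvPolynomial (Fin d) (ZMod 2) → ℝ),
      (∀ P, 0 ≤ w P) ∧
      (∀ P ∉ S, w P = 0) ∧
      (∑ P ∈ S, w P = 1) ∧
      (∀ P, w P ≠ 0 → P.totalDegree ≤ t) ∧
      (∀ x : Fin d → ZMod 2,
        1 - (1 / 2 : ℝ) ^ t ≤
          ∑ P ∈ S.filter
            (fun P => MvPolynomial.eval x P = (if x = 0 then 0 else 1)),
            w P) := by
  classical
  let f : (Fin t → Fin d → ZMod 2) → MvPolynomial (Fin d) (ZMod 2) := orPoly
  refine ⟨univ.image f, uniformPushforward f, uniformPushforward_nonneg f, fun P hP => ?_,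
    sum_uniformPushforward f, fun P hP => ?_, fun x => ?_⟩
  · by_contra hw
    obtain ⟨r, rfl⟩ := (uniformPushforward_ne_zero_iff f).1 hw
    exact hP (mem_image_of_mem f (mem_univ r))
  · obtain ⟨r, rfl⟩ := (uniformPushforward_ne_zero_iff f).1 hP
    simpa using totalDegree_orPoly_le r
  · refine one_sub_le_sum_filter_uniformPushforward f _ ?_
    have herr := card_orPoly_error_mul_le (κ := Fin t) x
    rw [Fintype.card_fin] at herr
    rw [one_div_pow, one_div_mul_eq_div, le_div_iff₀ (by positivity)]
    exact_mod_cast herr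
end

section
/- For all d, t ∈ ℕ, there exists a finitely supported probability distribution μ over matrices M with rows and columns indexed by {0,1}^d and entries in 𝔽₂ = ZMod 2 such that every matrix in the support of μ has rank (over 𝔽₂) at most ∑_{i=0}^{t} C(d, i), and for every pair x, y ∈ {0,1}^d, the probability over M ∼ μ that M_{x,y} = DISJ(x,y) is at least 1 − 2^{-t}, where DISJ(x,y) ∈ 𝔽₂ equals 1 if ∑_{i=1}^{d} x_i y_i = 0 (as an integer) and equals 0 otherwise. -/
/-!
Draw `t` independent uniform vectors `s₁, …, s_t ∈ 𝔽₂^d` and put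
`M(x, y) = ∏ⱼ (1 + ⟪sⱼ, x ∘ y⟫)`, where `x ∘ y` is the coordinatewise product.
If `x` and `y` are disjoint then `x ∘ y = 0` and `M(x, y) = 1`. Otherwise `M(x, y) = 0` unless
every `sⱼ` is orthogonal to the nonzero vector `x ∘ y`, which happens with probability `2^{-t}`.
As a function of `x`, each column of `M` is a product of `t` affine functions, hence (using
`xᵢ² = xᵢ`) a linear combination of multilinear monomials of degree at most `t`; these span a
space of dimension `∑_{i ≤ t} C(d, i)`, which bounds the rank.
-/

open Finset Matrix

lemma Matrix.rank_le_finrank_of_col_mem {m n K : Type*} [Fintype m] [Fintype n] [Field K]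
    {M : Matrix m n K} (p : Submodule K (m → K)) (h : ∀ j, Mᵀ j ∈ p) :
    M.rank ≤ Module.finrank K p := by
  rw [rank_eq_finrank_span_cols]
  exact Submodule.finrank_mono (Submodule.span_le.2 (Set.range_subset_iff.2 h))

lemma ZMod.two_ne_zero_iff : ∀ a : ZMod 2, a ≠ 0 ↔ a = 1 := by decide

namespace SetDisjointness

lemma prod_zmod_two_eq_ite {ι : Type*} (s : Finset ι) (a : ι → ZMod 2) :
    ∏ i ∈ s, a i = if ∀ i ∈ s, a i = 1 then 1 else 0 := by
  split_ifs with h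
  · exact prod_eq_one h
  · obtain ⟨i, hi, hai⟩ := not_forall₂.1 h
    exact prod_eq_zero hi (not_not.1 (mt (ZMod.two_ne_zero_iff _).1 hai))

section Monomials

variable {ι : Type*}

def monomial (A : Finset ι) (x : ι → ZMod 2) : ZMod 2 := ∏ i ∈ A, x i

@[simp]
lemma monomial_empty : monomial (∅ : Finset ι) = 1 := by
  funext x
  simp [monomial]

lemma monomial_mul_monomial [DecidableEq ι] (A B : Finset ι) :
    monomial A * monomial B = monomial (A ∪ B) := by
  funext x
  simp only [Pi.mul_apply, monomial, prod_zmod_two_eq_ite, forall_mem_union]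
  split_ifs <;> simp_all

def monomialSpan (ι : Type*) (k : ℕ) : Submodule (ZMod 2) ((ι → ZMod 2) → ZMod 2) :=
  Submodule.span (ZMod 2) (monomial '' {A | #A ≤ k})

lemma monomial_mem_monomialSpan {A : Finset ι} {k : ℕ} (h : #A ≤ k) :
    monomial A ∈ monomialSpan ι k :=
  Submodule.subset_span ⟨A, h, rfl⟩

lemma monomialSpan_mul_le [DecidableEq ι] (a b : ℕ) :
    monomialSpan ι a * monomialSpan ι b ≤ monomialSpan ι (a + b) := by
  rw [monomialSpan, monomialSpan, Submodule.span_mul_span, Submodule.span_le]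
  rintro _ ⟨_, ⟨A, hA, rfl⟩, _, ⟨B, hB, rfl⟩, rfl⟩
  dsimp only
  rw [monomial_mul_monomial]
  exact monomial_mem_monomialSpan ((card_union_le A B).trans (add_le_add hA hB))

lemma affine_mem_monomialSpan_one [Fintype ι] (c : ZMod 2) (a : ι → ZMod 2) :
    (fun x => c + ∑ i, a i * x i) ∈ monomialSpan ι 1 := by
  have : (fun x => c + ∑ i, a i * x i) = c • monomial ∅ + ∑ i, a i • monomial {i} := by
    funext x
    simp [monomial, Finset.sum_apply]
  rw [this]
  exact Submodule.add_mem _ (Submodule.smul_mem _ _ (monomial_mem_monomialSpan (by simp)))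
    (Submodule.sum_mem _ fun i _ => Submodule.smul_mem _ _ (monomial_mem_monomialSpan (by simp)))

lemma prod_mem_monomialSpan [DecidableEq ι] {κ : Type*} (J : Finset κ)
    (g : κ → (ι → ZMod 2) → ZMod 2) (hg : ∀ j ∈ J, g j ∈ monomialSpan ι 1) :
    ∏ j ∈ J, g j ∈ monomialSpan ι #J := by
  classical
  induction J using Finset.induction_on with
  | empty => simpa using monomial_mem_monomialSpan (ι := ι) (A := ∅) le_rfl
  | insert j J hj ih =>
    rw [prod_insert hj, card_insert_of_notMem hj, add_comm]
    exact monomialSpan_mul_le 1 #J <| Submodule.mul_mem_mul (hg j (mem_insert_self j J))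
      (ih fun j' hj' => hg j' (mem_insert_of_mem hj'))

lemma card_filter_card_le (ι : Type*) [Fintype ι] (k : ℕ) :
    #{A : Finset ι | #A ≤ k} = ∑ i ∈ range (k + 1), (Fintype.card ι).choose i := by
  classical
  have hfiber (i : ℕ) : #{A : Finset ι | #A = i} = (Fintype.card ι).choose i := by
    rw [← card_univ, ← card_powersetCard]
    congr 1
    ext A
    simp
  simp_rw [← hfiber, sum_card_fiberwise_eq_card_filter, mem_range, Nat.lt_succ_iff]

lemma finrank_monomialSpan_le [Fintype ι] (k : ℕ) :
    Module.finrank (ZMod 2) (monomialSpan ι k) ≤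
      ∑ i ∈ range (k + 1), (Fintype.card ι).choose i := by
  classical
  have : monomial '' {A : Finset ι | #A ≤ k} =
      (({A : Finset ι | #A ≤ k} : Finset (Finset ι)).image monomial : Finset _) := by
    simp
  rw [monomialSpan, this, ← card_filter_card_le]
  exact (finrank_span_finset_le_card _).trans card_image_le

end Monomials

section PushforwardWeight

variable {Ω α : Type*} [Fintype Ω] [DecidableEq α]

noncomputable def pushforwardWeight (f : Ω → α) (a : α) : ℝ :=
  #{ω | f ω = a} / Fintype.card Ω

lemma pushforwardWeight_nonneg (f : Ω → α) (a : α) : 0 ≤ pushforwardWeight f a := by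
  unfold pushforwardWeight
  positivity

lemma pushforwardWeight_eq_zero {f : Ω → α} {a : α} (h : a ∉ Set.range f) :
    pushforwardWeight f a = 0 := by
  have : ({ω | f ω = a} : Finset Ω) = ∅ := filter_eq_empty_iff.2 fun ω _ hω => h ⟨ω, hω⟩
  simp [pushforwardWeight, this]

lemma sum_pushforwardWeight (f : Ω → α) (T : Finset α) :
    ∑ a ∈ T, pushforwardWeight f a = #{ω | f ω ∈ T} / Fintype.card Ω := by
  simp only [pushforwardWeight, ← sum_div]
  exact_mod_cast congrArg (· / (Fintype.card Ω : ℝ)) (congrArg Nat.cast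
    (sum_card_fiberwise_eq_card_filter univ T f))

lemma sum_image_pushforwardWeight [Nonempty Ω] (f : Ω → α) :
    ∑ a ∈ univ.image f, pushforwardWeight f a = 1 := by
  rw [sum_pushforwardWeight]
  simp

lemma sum_filter_image_pushforwardWeight (f : Ω → α) (P : α → Prop) [DecidablePred P] :
    ∑ a ∈ (univ.image f).filter P, pushforwardWeight f a =
      #{ω | P (f ω)} / Fintype.card Ω := by
  rw [sum_pushforwardWeight]
  simp

end PushforwardWeight


section SeedMatrix

variable {ι : Type*} [Fintype ι] {t : ℕ}

def seedMatrix (s : Fin t → ι → ZMod 2) : Matrix (ι → ZMod 2) (ι → ZMod 2) (ZMod 2) :=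
  of fun x y => ∏ j, (1 + s j ⬝ᵥ (x * y))

lemma rank_seedMatrix_le [DecidableEq ι] (s : Fin t → ι → ZMod 2) :
    (seedMatrix s).rank ≤ ∑ i ∈ range (t + 1), (Fintype.card ι).choose i := by
  refine (rank_le_finrank_of_col_mem (monomialSpan ι t) fun y => ?_).trans
    (finrank_monomialSpan_le t)
  have hcol := prod_mem_monomialSpan univ (fun j x => 1 + ∑ i, (s j * y) i * x i)
    fun j _ => affine_mem_monomialSpan_one 1 (s j * y)
  rw [card_univ, Fintype.card_fin] at hcol
  convert hcol using 1
  funext x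
  simp [seedMatrix, dotProduct, Finset.prod_apply, mul_comm, mul_left_comm]

lemma seedMatrix_apply (s : Fin t → ι → ZMod 2) (x y : ι → ZMod 2) :
    seedMatrix s x y = if ∀ j, s j ⬝ᵥ (x * y) = 0 then 1 else 0 := by
  have (a : ZMod 2) : 1 + a = 1 ↔ a = 0 := by revert a; decide
  simp [seedMatrix, prod_zmod_two_eq_ite, this]

lemma seedMatrix_apply_eq_disj (s : Fin t → ι → ZMod 2) {x y : ι → ZMod 2}
    (h : x * y ≠ 0 → ∃ j, s j ⬝ᵥ (x * y) ≠ 0) :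
    seedMatrix s x y = if ∀ i, x i * y i = 0 then 1 else 0 := by
  rw [seedMatrix_apply]
  by_cases hxy : x * y = 0
  · have hs : ∀ j, s j ⬝ᵥ (x * y) = 0 := fun j => by rw [hxy, dotProduct_zero]
    have hdisj : ∀ i, x i * y i = 0 := congr_fun hxy
    rw [if_pos hs, if_pos hdisj]
  · obtain ⟨j, hj⟩ := h hxy
    have hdisj : ¬ ∀ i, x i * y i = 0 := fun h' => hxy (funext h')
    rw [if_neg (not_forall.2 ⟨j, hj⟩), if_neg hdisj]

lemma card_dotProduct_eq_zero_mul_two [DecidableEq ι] {z : ι → ZMod 2} (hz : z ≠ 0) :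
    #{v : ι → ZMod 2 | v ⬝ᵥ z = 0} * 2 = Fintype.card (ι → ZMod 2) := by
  obtain ⟨i, hi⟩ := Function.ne_iff.1 hz
  let φ : (ι → ZMod 2) →+ ZMod 2 := AddMonoidHom.mk' (· ⬝ᵥ z) fun a b => add_dotProduct a b z
  have hφ : Function.Surjective φ := fun c =>
    ⟨Pi.single i c, by simp [φ, (ZMod.two_ne_zero_iff _).1 hi]⟩
  have hfiber := AddMonoidHom.card_fiber_eq_of_mem_range φ (hφ 0) (hφ 1)
  simp only [φ, AddMonoidHom.mk'_apply] at hfiber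
  rw [mul_two, ← card_univ,
    ← card_filter_add_card_filter_not (s := univ) (p := fun v => v ⬝ᵥ z = 0)]
  nth_rw 2 [hfiber]
  simp only [ZMod.two_ne_zero_iff]

lemma card_forall_dotProduct_eq_zero_div [DecidableEq ι] {z : ι → ZMod 2} (hz : z ≠ 0) :
    (#{s : Fin t → ι → ZMod 2 | ∀ j, s j ⬝ᵥ z = 0} : ℝ) / Fintype.card (Fin t → ι → ZMod 2) =
      (1 / 2) ^ t := by
  have hpi : ({s : Fin t → ι → ZMod 2 | ∀ j, s j ⬝ᵥ z = 0} : Finset _) =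
      Fintype.piFinset fun _ => {v : ι → ZMod 2 | v ⬝ᵥ z = 0} := by
    ext
    simp
  have hpos : (0 : ℝ) < #{v : ι → ZMod 2 | v ⬝ᵥ z = 0} := by
    exact_mod_cast card_pos.2 ⟨0, by simp⟩
  rw [hpi, Fintype.card_piFinset_const, Fintype.card_fun, ← card_dotProduct_eq_zero_mul_two hz,
    Fintype.card_fin]
  push_cast
  rw [mul_pow, div_mul_cancel_left₀ (by positivity), one_div, inv_pow]

lemma one_sub_half_pow_le_card_seedMatrix_apply_eq [DecidableEq ι] (x y : ι → ZMod 2) :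
    1 - (1 / 2 : ℝ) ^ t ≤
      #{s : Fin t → ι → ZMod 2 | seedMatrix s x y = if ∀ i, x i * y i = 0 then 1 else 0} /
        Fintype.card (Fin t → ι → ZMod 2) := by
  set N : ℝ := (Fintype.card (Fin t → ι → ZMod 2) : ℝ)
  have hN : 0 < N := by positivity
  by_cases hxy : x * y = 0
  · have hall : ({s : Fin t → ι → ZMod 2 |
        seedMatrix s x y = if ∀ i, x i * y i = 0 then 1 else 0} : Finset _) = univ :=
      filter_true_of_mem fun s _ => seedMatrix_apply_eq_disj s fun h => absurd hxy h
    rw [hall, card_univ, div_self hN.ne']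
    linarith [pow_nonneg (by norm_num : (0 : ℝ) ≤ 1 / 2) t]
  · set bad : Finset (Fin t → ι → ZMod 2) := {s | ∀ j, s j ⬝ᵥ (x * y) = 0}
    set unbad : Finset (Fin t → ι → ZMod 2) := {s | ¬ ∀ j, s j ⬝ᵥ (x * y) = 0}
    have hgood : unbad ⊆ ({s | seedMatrix s x y = if ∀ i, x i * y i = 0 then 1 else 0} :
        Finset (Fin t → ι → ZMod 2)) :=
      monotone_filter_right _ fun s _ hs => seedMatrix_apply_eq_disj s fun _ => not_forall.1 hs
    have hsplit : (#bad : ℝ) + #unbad = N := by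
      rw [← Nat.cast_add, card_filter_add_card_filter_not, card_univ]
    calc 1 - (1 / 2 : ℝ) ^ t = 1 - #bad / N := by rw [card_forall_dotProduct_eq_zero_div hxy]
      _ = #unbad / N := by field_simp; linarith
      _ ≤ _ := by gcongr

end SeedMatrix

end SetDisjointness

open SetDisjointness in
/-- The Set-Disjointness matrix has low probabilistic rank: for all `d, t`,
there is a finitely supported probability distribution over
`2^d × 2^d` matrices over `𝔽₂`, each of rank at most `∑_{i=0}^{t} C(d,i)`,
such that for every pair `x, y ∈ {0,1}^d` a random matrix from the
distribution agrees with `DISJ(x,y)` at entry `(x,y)` with probability at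
least `1 - 2^{-t}`. -/
theorem probabilistic_rank_of_disjointness (d t : ℕ) :
    ∃ (S : Finset (Matrix (Fin d → ZMod 2) (Fin d → ZMod 2) (ZMod 2)))
      (w : Matrix (Fin d → ZMod 2) (Fin d → ZMod 2) (ZMod 2) → ℝ),
      (∀ M, 0 ≤ w M) ∧
      (∀ M ∉ S, w M = 0) ∧
      (∑ M ∈ S, w M = 1) ∧
      (∀ M, w M ≠ 0 → M.rank ≤ ∑ i ∈ Finset.range (t + 1), Nat.choose d i) ∧
      (∀ x y : Fin d → ZMod 2,
        1 - (1 / 2 : ℝ) ^ t ≤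
          ∑ M ∈ S.filter
            (fun M => M x y = (if ∀ i, x i * y i = 0 then 1 else 0)),
            w M) := by
  classical
  let f : (Fin t → Fin d → ZMod 2) → Matrix (Fin d → ZMod 2) (Fin d → ZMod 2) (ZMod 2) :=
    seedMatrix
  refine ⟨univ.image f, pushforwardWeight f, pushforwardWeight_nonneg f,
    fun M hM => pushforwardWeight_eq_zero (by simpa using hM), sum_image_pushforwardWeight f,
    fun M hM => ?_, fun x y => ?_⟩
  · obtain ⟨s, rfl⟩ := not_not.1 (mt pushforwardWeight_eq_zero hM)
    simpa using rank_seedMatrix_le s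
  · rw [sum_filter_image_pushforwardWeight]
    convert one_sub_half_pow_le_card_seedMatrix_apply_eq x y
end

section
/- Let m, m' ∈ ℕ and let W be an m × m' matrix over 𝔽₂ = ZMod 2 with W ≠ 0. If u is drawn uniformly at random from 𝔽₂^m and v is drawn uniformly and independently from 𝔽₂^{m'}, then the probability that uᵀ W v = 1 is at least 1/4. -/
open Finset Matrix

/- Over `𝔽₂` the test value is `uᵀ (W v)`. A nonzero additive map vanishes on at most half of
its domain, since translating by a point outside the kernel injects the kernel into the
complement. Applied to `v ↦ W v` this gives `W v ≠ 0` for at least half of all `v`, and for each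
such `v`, applied to `u ↦ uᵀ (W v)`, it gives `uᵀ (W v) = 1` for at least half of all `u`. -/

theorem AddMonoidHom.card_le_two_mul_card_filter_ne_zero {G H : Type*} [AddGroup G] [Fintype G]
    [AddZeroClass H] [DecidableEq H] (f : G →+ H) (hf : f ≠ 0) :
    Fintype.card G ≤ 2 * #{x | f x ≠ 0} := by
  obtain ⟨x₀, hx₀⟩ : ∃ x₀, f x₀ ≠ 0 := by simpa [DFunLike.ext_iff] using hf
  have hker : #{x | ¬f x ≠ 0} ≤ #{x | f x ≠ 0} := by
    refine card_le_card_of_injOn (· + x₀) (fun x hx => ?_) (add_left_injective x₀).injOn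
    simp_all
  have hsplit := card_filter_add_card_filter_not (s := univ) (fun x => f x ≠ 0)
  rw [card_univ] at hsplit
  omega

theorem two_pow_card_le_two_mul_card_filter_dotProduct_eq_one {ι : Type*} [Fintype ι]
    [DecidableEq ι] (w : ι → ZMod 2) (hw : w ≠ 0) :
    2 ^ Fintype.card ι ≤ 2 * #{u : ι → ZMod 2 | u ⬝ᵥ w = 1} := by
  have hf : AddMonoidHom.mk' (· ⬝ᵥ w) (fun a b => add_dotProduct a b w) ≠ 0 := by
    contrapose! hw
    refine dotProduct_eq_zero w fun u => ?_
    simpa [dotProduct_comm] using DFunLike.congr_fun hw u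
  have hne_zero_iff : ∀ x : ZMod 2, x ≠ 0 ↔ x = 1 := by decide
  simpa [Fintype.card_fun, ZMod.card, hne_zero_iff] using
    AddMonoidHom.card_le_two_mul_card_filter_ne_zero _ hf

theorem card_filter_prod_eq_sum_card_filter {α β : Type*} [Fintype α] [Fintype β]
    (p : α → β → Prop) [∀ a b, Decidable (p a b)] :
    #{x : α × β | p x.1 x.2} = ∑ b, #{a | p a b} := by
  simp only [card_filter, Fintype.sum_prod_type]
  exact sum_comm

/-- Random bilinear test over `𝔽₂`: if `W` is a nonzero `m × m'` matrix over
`𝔽₂` and `u, v` are uniform independent random vectors, then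
`Pr[uᵀ W v = 1] ≥ 1/4`, i.e. the number of pairs `(u, v)` with
`∑_k ∑_ℓ u_k W_{k,ℓ} v_ℓ = 1` is at least a quarter of all `2^{m+m'}` pairs. -/
theorem bilinear_test_nonzero_matrix (m m' : ℕ)
    (W : Matrix (Fin m) (Fin m') (ZMod 2)) (hW : W ≠ 0) :
    2 ^ (m + m') ≤
      4 * ((Finset.univ.filter
        (fun p : (Fin m → ZMod 2) × (Fin m' → ZMod 2) =>
          (∑ k : Fin m, ∑ l : Fin m', p.1 k * W k l * p.2 l) = 1)).card) := by
  have hform : ∀ u v, ∑ k, ∑ l, u k * W k l * v l = u ⬝ᵥ (W *ᵥ v) := by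
    simp [dotProduct, mulVec, mul_sum, mul_assoc]
  have hmulVec : W.mulVecLin.toAddMonoidHom ≠ 0 := by
    contrapose! hW
    exact ext_iff_mulVec.2 fun v => by simpa using DFunLike.congr_fun hW v
  have hhalf := AddMonoidHom.card_le_two_mul_card_filter_ne_zero _ hmulVec
  simp only [Fintype.card_fun, ZMod.card, Fintype.card_fin] at hhalf
  simp only [hform]
  rw [card_filter_prod_eq_sum_card_filter (fun u v => u ⬝ᵥ (W *ᵥ v) = 1), pow_add]
  calc
    2 ^ m * 2 ^ m' ≤ 2 ^ m * (2 * #{v : Fin m' → ZMod 2 | W *ᵥ v ≠ 0}) := by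
      gcongr; exact hhalf
    _ = 2 * ∑ v ∈ {v | W *ᵥ v ≠ 0}, 2 ^ m := by rw [sum_const, smul_eq_mul]; ring
    _ ≤ 2 * ∑ v ∈ {v | W *ᵥ v ≠ 0}, 2 * #{u | u ⬝ᵥ (W *ᵥ v) = 1} := by
      gcongr with v hv
      simpa using two_pow_card_le_two_mul_card_filter_dotProduct_eq_one _ (mem_filter.1 hv).2
    _ ≤ 4 * ∑ v, #{u : Fin m → ZMod 2 | u ⬝ᵥ (W *ᵥ v) = 1} := by
      rw [← mul_sum, ← mul_assoc]
      gcongr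
      · norm_num
      · exact subset_univ _
end

section
/- Let w ∈ ℕ, let ε ∈ [0,1], let Ω be a finite probability space, let A and B be finite sets, let F : A × B → {0, 1, ⊥} be a partial function, and let u : Ω × A → {0,1}^w and v : Ω × B → {0,1}^w be random Boolean vector families. Suppose that for every pair (a,b) with F(a,b) = 1, the probability over ω ∈ Ω that ⟨u(ω,a), v(ω,b)⟩ > 0 is at least 1 − ε, and for every pair (a,b) with F(a,b) = 0, the probability over ω that ⟨u(ω,a), v(ω,b)⟩ > 0 is at most ε. Assume the promise that either (i) there exists (a,b) ∈ A × B with F(a,b) = 1, or (ii) F(a,b) = 0 for every (a,b) ∈ A × B. Then with probability at least 1 − ε·|A|·|B| over ω ∈ Ω, the following holds: ⟨∑_{a ∈ A} u(ω,a), ∑_{b ∈ B} v(ω,b)⟩ > 0 if and only if case (i) holds. -/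
open scoped Classical

/-!
Split the aggregated inner product into the pairwise ones: since all entries are nonnegative,
`⟨∑ₐ u(ω,a), ∑_b v(ω,b)⟩ > 0` iff `⟨u(ω,a), v(ω,b)⟩ > 0` for some pair `(a,b)`. If some pair has
`F(a,b) = 1`, the aggregated test is then correct whenever that single pair's test is, which has
probability at least `1 - ε`. Otherwise every pair is a 0-pair, and by the union bound some pairwise
test fires with probability at most `ε·|A|·|B|`.
-/

open Finset Matrix

theorem dotProduct_sum_sum_pos_iff {R ι A B : Type*} [CommSemiring R] [LinearOrder R]
    [IsStrictOrderedRing R] [Fintype ι] [Fintype A] [Fintype B]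
    {x : A → ι → R} {y : B → ι → R} (hx : 0 ≤ x) (hy : 0 ≤ y) :
    0 < (∑ a, x a) ⬝ᵥ (∑ b, y b) ↔ ∃ a b, 0 < x a ⬝ᵥ y b := by
  have hxy : ∀ a b, 0 ≤ x a ⬝ᵥ y b := fun a b =>
    sum_nonneg fun j _ => mul_nonneg (hx a j) (hy b j)
  rw [sum_dotProduct]
  simp only [dotProduct_sum]
  rw [sum_pos_iff_of_nonneg fun a _ => sum_nonneg fun b _ => hxy a b]
  refine exists_congr fun a => ?_
  rw [sum_pos_iff_of_nonneg fun b _ => hxy a b]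
  simp only [mem_univ, true_and]

section WeightedSums

variable {Ω M : Type*} [Fintype Ω] [AddCommMonoid M] [PartialOrder M] [IsOrderedAddMonoid M]
  {Pr : Ω → M}

theorem sum_filter_mono (hPr : ∀ ω, 0 ≤ Pr ω) {p q : Ω → Prop} [DecidablePred p]
    [DecidablePred q] (hpq : ∀ ω, p ω → q ω) :
    ∑ ω ∈ univ.filter p, Pr ω ≤ ∑ ω ∈ univ.filter q, Pr ω :=
  sum_le_sum_of_subset_of_nonneg (monotone_filter_right _ fun ω _ => hpq ω) fun ω _ _ => hPr ω

theorem sum_filter_exists_le {ι : Type*} [Fintype ι] (hPr : ∀ ω, 0 ≤ Pr ω) (p : ι → Ω → Prop)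
    [∀ i, DecidablePred (p i)] [DecidablePred fun ω => ∃ i, p i ω] :
    ∑ ω ∈ univ.filter (fun ω => ∃ i, p i ω), Pr ω ≤ ∑ i, ∑ ω ∈ univ.filter (p i), Pr ω := by
  have hterm : ∀ i ω, 0 ≤ if p i ω then Pr ω else 0 := fun i ω => ite_nonneg (hPr ω) le_rfl
  simp only [sum_filter]
  rw [sum_comm]
  refine sum_le_sum fun ω _ => ?_
  split_ifs with h
  · obtain ⟨i, hi⟩ := h
    calc Pr ω = if p i ω then Pr ω else 0 := (if_pos hi).symm
      _ ≤ ∑ i, if p i ω then Pr ω else 0 :=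
        single_le_sum (fun i _ => hterm i ω) (mem_univ i)
  · exact sum_nonneg fun i _ => hterm i ω

end WeightedSums

theorem sum_filter_not_eq_one_sub {Ω R : Type*} [Fintype Ω] [AddCommGroup R] [One R] {Pr : Ω → R}
    (hPr : ∑ ω, Pr ω = 1) (p : Ω → Prop) [DecidablePred p] :
    ∑ ω ∈ univ.filter (fun ω => ¬ p ω), Pr ω = 1 - ∑ ω ∈ univ.filter p, Pr ω := by
  rw [← hPr, ← sum_filter_add_sum_filter_not univ p, add_sub_cancel_left]

theorem am_satisfying_pair_correctness_general
    (w : ℕ) (ε : ℝ) (hε0 : 0 ≤ ε)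
    (Ω : Type*) [Fintype Ω] (Pr : Ω → ℝ)
    (hPr0 : ∀ ω, 0 ≤ Pr ω) (hPr1 : ∑ ω : Ω, Pr ω = 1)
    (A B : Type*) [Fintype A] [Fintype B]
    (F : A → B → Option Bool)
    (u : Ω → A → Fin w → Bool) (v : Ω → B → Fin w → Bool)
    (hyes : ∀ a b, F a b = some true →
      1 - ε ≤ ∑ ω ∈ Finset.univ.filter (fun ω : Ω =>
        0 < ∑ j : Fin w,
          (if u ω a j then (1 : ℝ) else 0) * (if v ω b j then (1 : ℝ) else 0)),
        Pr ω)
    (hno : ∀ a b, F a b = some false →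
      (∑ ω ∈ Finset.univ.filter (fun ω : Ω =>
        0 < ∑ j : Fin w,
          (if u ω a j then (1 : ℝ) else 0) * (if v ω b j then (1 : ℝ) else 0)),
        Pr ω) ≤ ε)
    (hpromise : (∃ a b, F a b = some true) ∨ (∀ a b, F a b = some false)) :
    1 - ε * Fintype.card A * Fintype.card B ≤
      ∑ ω ∈ Finset.univ.filter (fun ω : Ω =>
        (0 < ∑ j : Fin w,
            (∑ a : A, if u ω a j then (1 : ℝ) else 0) *
            (∑ b : B, if v ω b j then (1 : ℝ) else 0))
          ↔ (∃ a b, F a b = some true)),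
        Pr ω := by
  have hagg : ∀ ω, (0 < ∑ j : Fin w,
        (∑ a : A, if u ω a j then (1 : ℝ) else 0) * (∑ b : B, if v ω b j then (1 : ℝ) else 0)) ↔
      ∃ a b, 0 < ∑ j : Fin w,
        (if u ω a j then (1 : ℝ) else 0) * (if v ω b j then (1 : ℝ) else 0) := fun ω => by
    simpa only [dotProduct, Finset.sum_apply] using dotProduct_sum_sum_pos_iff
      (x := fun a j => if u ω a j then (1 : ℝ) else 0)
      (y := fun b j => if v ω b j then (1 : ℝ) else 0)
      (fun a j => by positivity) (fun b j => by positivity)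
  rcases hpromise with ⟨a₀, b₀, h₀⟩ | hall
  · have hcard : ε ≤ ε * Fintype.card A * Fintype.card B := by
      rw [mul_assoc]
      refine le_mul_of_one_le_right hε0 ?_
      exact_mod_cast Nat.mul_pos (Fintype.card_pos_iff.2 ⟨a₀⟩) (Fintype.card_pos_iff.2 ⟨b₀⟩)
    refine le_trans ?_ ((hyes a₀ b₀ h₀).trans (sum_filter_mono hPr0 fun ω h => ?_))
    · linarith
    · exact iff_of_true ((hagg ω).2 ⟨a₀, b₀, h⟩) ⟨a₀, b₀, h₀⟩
  · have hnone : ¬ ∃ a b, F a b = some true := fun ⟨a, b, h⟩ => by simpa [h] using hall a b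
    have hbad : ∑ ω ∈ univ.filter (fun ω => ∃ a b, 0 < ∑ j : Fin w,
          (if u ω a j then (1 : ℝ) else 0) * (if v ω b j then (1 : ℝ) else 0)), Pr ω ≤
        ε * Fintype.card A * Fintype.card B :=
      calc _ ≤ _ := (sum_filter_exists_le hPr0 _).trans
            (sum_le_sum fun a _ => sum_filter_exists_le hPr0 _)
        _ ≤ ∑ a : A, ∑ b : B, ε := sum_le_sum fun a _ => sum_le_sum fun b _ => hno a b (hall a b)
        _ = _ := by simp only [sum_const, card_univ, nsmul_eq_mul]; ring
    calc 1 - ε * Fintype.card A * Fintype.card B ≤ 1 - _ := sub_le_sub_left hbad 1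
      _ = _ := (sum_filter_not_eq_one_sub hPr1 _).symm
      _ ≤ _ := sum_filter_mono hPr0 fun ω h => iff_of_false (fun hpos => h ((hagg ω).1 hpos)) hnone

/-- Correctness core of the reduction from an Arthur–Merlin communication
protocol to `F`-Satisfying-Pair: if for every 1-pair (resp. 0-pair) of `F` the
indicator vectors of Alice and Bob have positive inner product with
probability at least `1 - ε` (resp. at most `ε`) over the random challenge
`ω`, and the promise holds, then with probability at least
`1 - ε·|A|·|B|` the aggregated inner product is positive iff some pair
satisfies `F(a,b) = 1`. Here `F a b = some true`/`some false`/`none` encodes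
`F(a,b) = 1`/`0`/`⊥`. -/
theorem am_satisfying_pair_correctness
    (w : ℕ) (ε : ℝ) (hε0 : 0 ≤ ε) (hε1 : ε ≤ 1)
    (Ω : Type*) [Fintype Ω] (Pr : Ω → ℝ)
    (hPr0 : ∀ ω, 0 ≤ Pr ω) (hPr1 : ∑ ω : Ω, Pr ω = 1)
    (A B : Type*) [Fintype A] [Fintype B]
    (F : A → B → Option Bool)
    (u : Ω → A → Fin w → Bool) (v : Ω → B → Fin w → Bool)
    (hyes : ∀ a b, F a b = some true →
      1 - ε ≤ ∑ ω ∈ Finset.univ.filter (fun ω : Ω =>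
        0 < ∑ j : Fin w,
          (if u ω a j then (1 : ℝ) else 0) * (if v ω b j then (1 : ℝ) else 0)),
        Pr ω)
    (hno : ∀ a b, F a b = some false →
      (∑ ω ∈ Finset.univ.filter (fun ω : Ω =>
        0 < ∑ j : Fin w,
          (if u ω a j then (1 : ℝ) else 0) * (if v ω b j then (1 : ℝ) else 0)),
        Pr ω) ≤ ε)
    (hpromise : (∃ a b, F a b = some true) ∨ (∀ a b, F a b = some false)) :
    1 - ε * Fintype.card A * Fintype.card B ≤
      ∑ ω ∈ Finset.univ.filter (fun ω : Ω =>
        (0 < ∑ j : Fin w,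
            (∑ a : A, if u ω a j then (1 : ℝ) else 0) *
            (∑ b : B, if v ω b j then (1 : ℝ) else 0))
          ↔ (∃ a b, F a b = some true)),
        Pr ω :=
  am_satisfying_pair_correctness_general w ε hε0 Ω Pr hPr0 hPr1 A B F u v hyes hno hpromise
end
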